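/- arXiv:quant-ph/0506197 — 5 statements merged into one kernel-verified Lean document; each statement's English description precedes it below -/
import Mathlib

section
/- Let ρ = Σ_{a=1}^n p_a Π_a and σ = Σ_{k=1}^d s_k |ψ_k⟩⟨ψ_k| with d_HS(ρ,σ) ≤ δ. Then for all a and k: |p_a − s_k| · sqrt(⟨ψ_k|Π_a|ψ_k⟩) ≤ δ. -/
open Matrix

private lemma aux_nonneg {d : ℕ} (v : Fin d → ℂ) : 0 ≤ (star v ⬝ᵥ v).re := by
  have h : star v ⬝ᵥ v = ∑ i, (Complex.normSq (v i) : ℂ) := by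
    simp [dotProduct, Complex.normSq_eq_conj_mul_self]
  rw [h, Complex.re_sum]
  exact Finset.sum_nonneg fun i _ => by simp [Complex.normSq_nonneg]

private lemma aux_dot_sq {d : ℕ} (A : Matrix (Fin d) (Fin d) ℂ) (hA : Aᴴ = A)
    (v : Fin d → ℂ) : star v ⬝ᵥ (A * A) *ᵥ v = star (A *ᵥ v) ⬝ᵥ (A *ᵥ v) := by
  rw [star_mulVec, hA, dotProduct_mulVec, dotProduct_mulVec, vecMul_vecMul]

private lemma aux_vecMulVec {d : ℕ} (v w x : Fin d → ℂ) :
    (vecMulVec v w) *ᵥ x = (w ⬝ᵥ x) • v := by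
  ext i
  simp [vecMulVec_apply, mulVec, dotProduct, Finset.mul_sum, mul_assoc, mul_comm, mul_left_comm]

theorem stmt_7 (d n : ℕ)
    (P : Fin n → Matrix (Fin d) (Fin d) ℂ)
    (hPh : ∀ a, (P a).IsHermitian)
    (hPo : ∀ a b, P a * P b = if a = b then P a else 0)
    (hP1 : ∑ a, P a = 1)
    (p : Fin n → ℝ) (hpinj : Function.Injective p)
    (ψ : Fin d → (Fin d → ℂ))
    (hψ : ∀ k l, star (ψ k) ⬝ᵥ ψ l = if k = l then 1 else 0)
    (s : Fin d → ℝ)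
    (ρ σ : Matrix (Fin d) (Fin d) ℂ)
    (hρ : ρ = ∑ a, (p a : ℂ) • P a)
    (hσ : σ = ∑ k, (s k : ℂ) • vecMulVec (ψ k) (star (ψ k)))
    (δ : ℝ) (hδ0 : 0 ≤ δ)
    (hdist : Real.sqrt (((ρ - σ) * (ρ - σ)).trace.re) ≤ δ) :
    ∀ a k, |p a - s k| * Real.sqrt ((star (ψ k) ⬝ᵥ (P a).mulVec (ψ k)).re) ≤ δ := by
  intro a k
  set M := ρ - σ with hMdef
  have hPH : ∀ b, (P b)ᴴ = P b := fun b => (hPh b).eq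
  have hPP : P a * P a = P a := by simpa using hPo a a
  have hρH : ρᴴ = ρ := by
    rw [hρ, conjTranspose_sum]
    refine Finset.sum_congr rfl fun b _ => ?_
    rw [conjTranspose_smul, hPH]
    norm_num
  have hσH : σᴴ = σ := by
    rw [hσ, conjTranspose_sum]
    refine Finset.sum_congr rfl fun l _ => ?_
    rw [conjTranspose_smul]
    congr 1
    · norm_num
    · ext i j
      simp [vecMulVec_apply, conjTranspose_apply, mul_comm]
  have hMH : Mᴴ = M := by rw [hMdef, conjTranspose_sub, hρH, hσH]
  -- trace over the orthonormal basis
  set U : Matrix (Fin d) (Fin d) ℂ := Matrix.of fun i l => ψ l i with hU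
  have hUU : Uᴴ * U = 1 := by
    ext kk ll
    have h := hψ kk ll
    simp only [dotProduct, Pi.star_apply, Complex.star_def] at h
    simp [Matrix.mul_apply, conjTranspose_apply, Matrix.one_apply, hU, h]
  have hUU' : U * Uᴴ = 1 := mul_eq_one_comm.mp hUU
  have htr : ∀ B : Matrix (Fin d) (Fin d) ℂ,
      B.trace = ∑ l, star (ψ l) ⬝ᵥ B *ᵥ (ψ l) := by
    intro B
    have h1 : B.trace = (Uᴴ * B * U).trace := by
      rw [trace_mul_cycle, hUU', Matrix.one_mul]
    rw [h1, trace]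
    refine Finset.sum_congr rfl fun l _ => ?_
    simp only [diag_apply, Matrix.mul_apply, conjTranspose_apply, hU, of_apply,
      dotProduct, mulVec, Pi.star_apply, Finset.sum_mul, Finset.mul_sum]
    rw [Finset.sum_comm]
    refine Finset.sum_congr rfl fun i _ => Finset.sum_congr rfl fun j _ => ?_
    ring
  -- σ acts on ψ k as multiplication by s k
  have hσψ : σ *ᵥ ψ k = (s k : ℂ) • ψ k := by
    rw [hσ]
    have : (∑ l, (s l : ℂ) • vecMulVec (ψ l) (star (ψ l))) *ᵥ ψ k
        = ∑ l, (s l : ℂ) • ((star (ψ l) ⬝ᵥ ψ k) • ψ l) := by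
      have hsum : ∀ (A : Fin d → Matrix (Fin d) (Fin d) ℂ) (x : Fin d → ℂ),
          (∑ l, A l) *ᵥ x = ∑ l, (A l) *ᵥ x := by
        intro A x
        ext i
        simp only [mulVec, dotProduct, Finset.sum_apply, Matrix.sum_apply, Finset.sum_mul]
        rw [Finset.sum_comm]
      rw [hsum]
      refine Finset.sum_congr rfl fun l _ => ?_
      rw [smul_mulVec, aux_vecMulVec]
    rw [this]
    rw [Finset.sum_eq_single k]
    · rw [hψ k k]; simp
    · intro l _ hl
      rw [hψ l k]; simp [hl]
    · simp
  -- P a * ρ = p a • P a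
  have hPρ : P a * ρ = (p a : ℂ) • P a := by
    rw [hρ, Finset.mul_sum]
    have : ∀ b, P a * ((p b : ℂ) • P b) = (p b : ℂ) • (if a = b then P a else 0) := by
      intro b
      rw [mul_smul_comm, hPo a b]
    simp only [this]
    rw [Finset.sum_eq_single a]
    · simp
    · intro b _ hb
      simp [Ne.symm hb]
    · simp
  set w : Fin d → ℂ := M *ᵥ ψ k with hwdef
  have hw : w = ρ *ᵥ ψ k - (s k : ℂ) • ψ k := by
    rw [hwdef, hMdef, sub_mulVec, hσψ]
  have hPw : P a *ᵥ w = ((p a : ℂ) - (s k : ℂ)) • (P a *ᵥ ψ k) := by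
    rw [hw, mulVec_sub, mulVec_smul, mulVec_mulVec, hPρ, smul_mulVec, sub_smul]
  -- q : the projection overlap
  set q : ℝ := (star (ψ k) ⬝ᵥ (P a).mulVec (ψ k)).re with hqdef
  have hq : (star (P a *ᵥ ψ k) ⬝ᵥ (P a *ᵥ ψ k)) = star (ψ k) ⬝ᵥ (P a) *ᵥ (ψ k) := by
    have h := aux_dot_sq (P a) (hPH a) (ψ k)
    rw [hPP] at h
    exact h.symm
  have hq0 : 0 ≤ q := by
    rw [hqdef, ← hq]
    exact aux_nonneg _
  -- ‖P a w‖² = (p a - s k)² q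
  have hnormPw : (star (P a *ᵥ w) ⬝ᵥ (P a *ᵥ w)).re = (p a - s k) ^ 2 * q := by
    rw [hPw, star_smul, smul_dotProduct, dotProduct_smul, smul_eq_mul, smul_eq_mul,
      ← mul_assoc, hq]
    have hc : star ((p a : ℂ) - (s k : ℂ)) * ((p a : ℂ) - (s k : ℂ))
        = (((p a - s k) ^ 2 : ℝ) : ℂ) := by
      push_cast
      rw [← Complex.ofReal_sub]
      rw [Complex.star_def, Complex.conj_ofReal]
      ring
    rw [hc, Complex.re_ofReal_mul, hqdef]
  -- ‖P a w‖² ≤ ‖w‖²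
  have hproj : (star (P a *ᵥ w) ⬝ᵥ (P a *ᵥ w)).re ≤ (star w ⬝ᵥ w).re := by
    have hQH : (1 - P a)ᴴ = 1 - P a := by
      rw [conjTranspose_sub, conjTranspose_one, hPH]
    have hQQ : (1 - P a) * (1 - P a) = 1 - P a := by
      rw [mul_sub, sub_mul, sub_mul, hPP]
      simp
    have h0 : 0 ≤ (star w ⬝ᵥ (1 - P a) *ᵥ w).re := by
      rw [← hQQ, aux_dot_sq _ hQH]
      exact aux_nonneg _
    have hsplit : star w ⬝ᵥ (1 - P a) *ᵥ w = star w ⬝ᵥ w - star w ⬝ᵥ (P a) *ᵥ w := by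
      rw [sub_mulVec, dotProduct_sub, one_mulVec]
    rw [hsplit, Complex.sub_re] at h0
    have hPww : star w ⬝ᵥ (P a) *ᵥ w = star (P a *ᵥ w) ⬝ᵥ (P a *ᵥ w) := by
      have h := aux_dot_sq (P a) (hPH a) w
      rw [hPP] at h
      exact h
    rw [hPww] at h0
    linarith
  -- ‖w‖² ≤ tr(M²)
  set t : ℝ := ((ρ - σ) * (ρ - σ)).trace.re with htdef
  have hwt : (star w ⬝ᵥ w).re ≤ t := by
    have h1 : t = ∑ l, (star (ψ l) ⬝ᵥ (M * M) *ᵥ (ψ l)).re := by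
      rw [htdef, ← hMdef, htr (M * M), Complex.re_sum]
    have h2 : ∀ l, (star (ψ l) ⬝ᵥ (M * M) *ᵥ (ψ l)).re
        = (star (M *ᵥ ψ l) ⬝ᵥ (M *ᵥ ψ l)).re := by
      intro l
      rw [aux_dot_sq M hMH]
    rw [h1]
    have h3 : (star w ⬝ᵥ w).re = (star (ψ k) ⬝ᵥ (M * M) *ᵥ (ψ k)).re := by
      rw [h2 k, hwdef]
    rw [h3]
    refine Finset.single_le_sum (f := fun l => (star (ψ l) ⬝ᵥ (M * M) *ᵥ ψ l).re) (fun l _ => ?_) (Finset.mem_univ k)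
    show 0 ≤ (star (ψ l) ⬝ᵥ (M * M) *ᵥ ψ l).re
    rw [h2 l]
    exact aux_nonneg _
  -- final chain
  calc |p a - s k| * Real.sqrt q
      = Real.sqrt ((p a - s k) ^ 2 * q) := by
        rw [Real.sqrt_mul (sq_nonneg _), Real.sqrt_sq_eq_abs]
    _ ≤ Real.sqrt t := Real.sqrt_le_sqrt (by linarith)
    _ ≤ δ := hdist
end

section
/- Let ρ = Σ_{a=1}^n p_a Π_a and σ = Σ_{k=1}^d s_k |ψ_k⟩⟨ψ_k| with d_HS(ρ,σ) ≤ δ. Then for every a there exists k with |p_a − s_k| ≤ δ, and for every k there exists a with |p_a − s_k| ≤ δ. -/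
/-!
If `T = ∑ k, s k • R k` for a complete family `R` of orthogonal projections and
`‖T x - c • x‖ ≤ δ ‖x‖` with `x ≠ 0`, then expanding along `R` gives
`∑ k, ‖s k - c‖² ‖R k x‖² ≤ δ² ∑ k, ‖R k x‖²`, so `‖s k - c‖ ≤ δ` for some `k`.
A nonzero vector in the range of `P a` is an eigenvector of `ρ` for `p a`, and `ψ k` is an
eigenvector of `σ` for `s k`; since the Hilbert–Schmidt norm of `ρ - σ` bounds its operator
norm, each of these is a `δ`-approximate eigenvector of the other operator.
-/

open scoped InnerProductSpace

lemma exists_le_of_sum_mul_le {ι : Type*} [Fintype ι] {f w : ι → ℝ} {C : ℝ}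
    (hw : ∀ i, 0 ≤ w i) (hpos : 0 < ∑ i, w i) (h : ∑ i, f i * w i ≤ C * ∑ i, w i) :
    ∃ i, f i ≤ C := by
  by_contra! hlt
  obtain ⟨j, -, hj⟩ := Finset.exists_lt_of_sum_lt (by simpa using hpos : ∑ _ : ι, (0 : ℝ) < _)
  refine h.not_gt ?_
  rw [Finset.mul_sum]
  exact Finset.sum_lt_sum (fun i _ => mul_le_mul_of_nonneg_right (hlt i).le (hw i))
    ⟨j, Finset.mem_univ j, mul_lt_mul_of_pos_right (hlt j) hj⟩

section Algebra

variable {R A ι : Type*} [CommSemiring R] [Semiring A] [Algebra R A] [Fintype ι] {e : ι → A}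

lemma OrthogonalIdempotents.sum_smul_mul_sum_smul (he : OrthogonalIdempotents e) (a b : ι → R) :
    (∑ i, a i • e i) * (∑ i, b i • e i) = ∑ i, (a i * b i) • e i := by
  classical
  simp only [Finset.sum_mul_sum, smul_mul_smul_comm, he.mul_eq, smul_ite, smul_zero,
    Finset.sum_ite_eq, Finset.mem_univ, if_true]

lemma OrthogonalIdempotents.sum_smul_mul (he : OrthogonalIdempotents e) (a : ι → R) (j : ι) :
    (∑ i, a i • e i) * e j = a j • e j := by
  classical
  simp only [Finset.sum_mul, smul_mul_assoc, he.mul_eq, smul_ite, smul_zero,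
    Finset.sum_ite_eq', Finset.mem_univ, if_true]

end Algebra

section HilbertSpace

variable {𝕜 E ι : Type*} [RCLike 𝕜] [NormedAddCommGroup E] [InnerProductSpace 𝕜 E]
  [CompleteSpace E] [Fintype ι] {Q : ι → E →L[𝕜] E}

lemma ContinuousLinearMap.norm_apply_sq_eq_re_inner_star_mul_self (T : E →L[𝕜] E) (x : E) :
    ‖T x‖ ^ 2 = RCLike.re ⟪x, (star T * T) x⟫_𝕜 := by
  rw [apply_norm_sq_eq_inner_adjoint_right, star_eq_adjoint, mul_def]

lemma OrthogonalIdempotents.norm_sum_smul_apply_sq (hQ : OrthogonalIdempotents Q)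
    (hQsa : ∀ i, IsSelfAdjoint (Q i)) (c : ι → 𝕜) (x : E) :
    ‖(∑ i, c i • Q i) x‖ ^ 2 = ∑ i, ‖c i‖ ^ 2 * ‖Q i x‖ ^ 2 := by
  have hstar : star (∑ i, c i • Q i) = ∑ i, star (c i) • Q i := by
    simp only [star_sum, star_smul, (hQsa _).star_eq]
  have hQx : ∀ i, ‖Q i x‖ ^ 2 = RCLike.re ⟪x, Q i x⟫_𝕜 := fun i => by
    rw [ContinuousLinearMap.norm_apply_sq_eq_re_inner_star_mul_self, (hQsa i).star_eq,
      (hQ.idem i).eq]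
  rw [ContinuousLinearMap.norm_apply_sq_eq_re_inner_star_mul_self, hstar,
    hQ.sum_smul_mul_sum_smul, sum_apply, inner_sum, map_sum]
  refine Finset.sum_congr rfl fun i _ => ?_
  rw [hQx, smul_apply, inner_smul_right, RCLike.star_def, RCLike.conj_mul,
    ← RCLike.ofReal_pow, RCLike.re_ofReal_mul]

lemma CompleteOrthogonalIdempotents.sum_norm_apply_sq (hQ : CompleteOrthogonalIdempotents Q)
    (hQsa : ∀ i, IsSelfAdjoint (Q i)) (x : E) : ∑ i, ‖Q i x‖ ^ 2 = ‖x‖ ^ 2 := by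
  simpa [hQ.complete] using (hQ.norm_sum_smul_apply_sq hQsa 1 x).symm

lemma CompleteOrthogonalIdempotents.exists_norm_sub_le_of_norm_sub_smul_le
    (hQ : CompleteOrthogonalIdempotents Q) (hQsa : ∀ i, IsSelfAdjoint (Q i)) (t : ι → 𝕜)
    {c : 𝕜} {δ : ℝ} {x : E} (hx : x ≠ 0) (h : ‖(∑ i, t i • Q i) x - c • x‖ ≤ δ * ‖x‖) :
    ∃ i, ‖t i - c‖ ≤ δ := by
  have hxpos : 0 < ‖x‖ := norm_pos_iff.mpr hx
  have hδ : 0 ≤ δ := nonneg_of_mul_nonneg_left ((norm_nonneg _).trans h) hxpos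
  have hshift : (∑ i, t i • Q i) x - c • x = (∑ i, (t i - c) • Q i) x := by
    simp only [sub_smul, Finset.sum_sub_distrib, ← Finset.smul_sum, hQ.complete, sub_apply,
      smul_apply, one_apply_eq_self]
  have hsq : ∑ i, ‖t i - c‖ ^ 2 * ‖Q i x‖ ^ 2 ≤ δ ^ 2 * ∑ i, ‖Q i x‖ ^ 2 := by
    rw [← hQ.norm_sum_smul_apply_sq hQsa, ← hshift, hQ.sum_norm_apply_sq hQsa, ← mul_pow]
    exact pow_le_pow_left₀ (norm_nonneg _) h 2
  obtain ⟨i, hi⟩ := exists_le_of_sum_mul_le (fun i => sq_nonneg ‖Q i x‖)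
    (by rw [hQ.sum_norm_apply_sq hQsa]; positivity) hsq
  exact ⟨i, (sq_le_sq₀ (norm_nonneg _) hδ).mp hi⟩

lemma OrthogonalIdempotents.exists_norm_sub_le_of_norm_sub_le {κ : Type*} [Fintype κ]
    {R : κ → E →L[𝕜] E} (hQ : OrthogonalIdempotents Q) (hR : CompleteOrthogonalIdempotents R)
    (hRsa : ∀ k, IsSelfAdjoint (R k)) (t : ι → 𝕜) (s : κ → 𝕜) {δ : ℝ}
    (h : ‖∑ i, t i • Q i - ∑ k, s k • R k‖ ≤ δ) {j : ι} (hj : Q j ≠ 0) :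
    ∃ k, ‖s k - t j‖ ≤ δ := by
  obtain ⟨y, hy⟩ : ∃ y, Q j y ≠ 0 := by
    by_contra! hzero
    exact hj (ContinuousLinearMap.ext hzero)
  have heigen : (∑ i, t i • Q i) (Q j y) = t j • Q j y := by
    rw [← mul_apply_eq_comp, hQ.sum_smul_mul, smul_apply]
  refine hR.exists_norm_sub_le_of_norm_sub_smul_le hRsa s hy ?_
  calc ‖(∑ k, s k • R k) (Q j y) - t j • Q j y‖
      = ‖(∑ i, t i • Q i - ∑ k, s k • R k) (Q j y)‖ := by
        rw [sub_apply, heigen, norm_sub_rev]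
    _ ≤ δ * ‖Q j y‖ := (ContinuousLinearMap.le_opNorm _ _).trans (by gcongr)

end HilbertSpace

open Matrix

section Frobenius

variable {𝕜 m n : Type*} [RCLike 𝕜] [Fintype m] [Fintype n]

attribute [local instance] Matrix.frobeniusNormedAddCommGroup

lemma Matrix.frobenius_norm_eq_sqrt_re_trace (A : Matrix m n 𝕜) :
    ‖A‖ = √(RCLike.re (Aᴴ * A).trace) := by
  have htrace : (Aᴴ * A).trace = ((∑ i, ∑ j, ‖A i j‖ ^ 2 : ℝ) : 𝕜) := by
    rw [trace, Finset.sum_comm]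
    push_cast
    refine Finset.sum_congr rfl fun i _ => Finset.sum_congr rfl fun j _ => ?_
    simp only [conjTranspose_apply, RCLike.star_def, RCLike.conj_mul]
  rw [frobenius_norm_def, htrace, RCLike.ofReal_re, Real.sqrt_eq_rpow]
  norm_cast

lemma Matrix.norm_toEuclideanCLM_le_sqrt_re_trace [DecidableEq n] (A : Matrix n n 𝕜) :
    ‖toEuclideanCLM (n := n) (𝕜 := 𝕜) A‖ ≤ √(RCLike.re (Aᴴ * A).trace) := by
  rw [← frobenius_norm_eq_sqrt_re_trace]
  refine ContinuousLinearMap.opNorm_le_bound _ (norm_nonneg _) fun x => ?_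
  calc ‖toEuclideanCLM (n := n) (𝕜 := 𝕜) A x‖
      = ‖A * replicateCol Unit (WithLp.ofLp x)‖ := by
        rw [← replicateCol_mulVec, frobenius_norm_replicateCol]; rfl
    _ ≤ ‖A‖ * ‖x‖ := by
        refine (frobenius_norm_mul _ _).trans_eq ?_
        rw [frobenius_norm_replicateCol, WithLp.toLp_ofLp]

end Frobenius

section Matrix

variable {𝕜 n : Type*} [RCLike 𝕜] [Fintype n] [DecidableEq n]

lemma Matrix.completeOrthogonalIdempotents_vecMulVec_star {ψ : n → n → 𝕜}
    (hψ : ∀ k l, star (ψ k) ⬝ᵥ ψ l = if k = l then 1 else 0) :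
    CompleteOrthogonalIdempotents fun k => vecMulVec (ψ k) (star (ψ k)) := by
  refine ⟨OrthogonalIdempotents.iff_mul_eq.mpr fun k l => ?_, ?_⟩
  · rw [vecMulVec_mul_vecMulVec, hψ]
    split_ifs with hkl
    · rw [hkl, one_smul]
    · rw [zero_smul, vecMulVec_zero]
  · let U : Matrix n n 𝕜 := of fun i k => ψ k i
    have hUU : Uᴴ * U = 1 := by
      ext k l
      simpa [U, mul_apply, one_apply, dotProduct] using hψ k l
    calc ∑ k, vecMulVec (ψ k) (star (ψ k)) = U * Uᴴ := by
          ext i j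
          simp [U, mul_apply, vecMulVec_apply, sum_apply]
      _ = 1 := mul_eq_one_comm.mp hUU

lemma Matrix.exists_norm_sub_le_of_sqrt_re_trace_le {ι κ : Type*} [Fintype ι] [Fintype κ]
    {P : ι → Matrix n n 𝕜} {R : κ → Matrix n n 𝕜} (hP : OrthogonalIdempotents P)
    (hR : CompleteOrthogonalIdempotents R) (hRh : ∀ k, (R k).IsHermitian)
    (t : ι → 𝕜) (s : κ → 𝕜) {δ : ℝ}
    (h : √(RCLike.re
      ((∑ i, t i • P i - ∑ k, s k • R k)ᴴ * (∑ i, t i • P i - ∑ k, s k • R k)).trace) ≤ δ)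
    {j : ι} (hj : P j ≠ 0) :
    ∃ k, ‖s k - t j‖ ≤ δ := by
  let Φ := toEuclideanCLM (n := n) (𝕜 := 𝕜)
  refine (hP.map (RingHomClass.toRingHom Φ)).exists_norm_sub_le_of_norm_sub_le
    (hR.map (RingHomClass.toRingHom Φ)) (fun k => IsSelfAdjoint.map (hRh k) Φ) t s ?_
    ((map_ne_zero_iff Φ Φ.injective).mpr hj)
  calc ‖∑ i, t i • Φ (P i) - ∑ k, s k • Φ (R k)‖
      = ‖Φ (∑ i, t i • P i - ∑ k, s k • R k)‖ := by
        simp only [map_sub, map_sum, map_smul]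
    _ ≤ δ := (norm_toEuclideanCLM_le_sqrt_re_trace _).trans h

end Matrix

theorem stmt_8_general (d n : ℕ)
    (P : Fin n → Matrix (Fin d) (Fin d) ℂ)
    (hPh : ∀ a, (P a).IsHermitian)
    (hPo : ∀ a b, P a * P b = if a = b then P a else 0)
    (hP1 : ∑ a, P a = 1)
    (p : Fin n → ℝ)
    (ψ : Fin d → (Fin d → ℂ))
    (hψ : ∀ k l, star (ψ k) ⬝ᵥ ψ l = if k = l then 1 else 0)
    (s : Fin d → ℝ)
    (ρ σ : Matrix (Fin d) (Fin d) ℂ)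
    (hρ : ρ = ∑ a, (p a : ℂ) • P a)
    (hσ : σ = ∑ k, (s k : ℂ) • vecMulVec (ψ k) (star (ψ k)))
    (δ : ℝ)
    (hdist : Real.sqrt (((ρ - σ) * (ρ - σ)).trace.re) ≤ δ)
    (hPne : ∀ a, P a ≠ 0) :
    (∀ a, ∃ k, |p a - s k| ≤ δ) ∧ (∀ k, ∃ a, |p a - s k| ≤ δ) := by
  have hP : CompleteOrthogonalIdempotents P := ⟨OrthogonalIdempotents.iff_mul_eq.mpr hPo, hP1⟩
  have hΨ := completeOrthogonalIdempotents_vecMulVec_star hψ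
  have hΨh : ∀ k, (vecMulVec (ψ k) (star (ψ k))).IsHermitian := fun k => by simp [IsHermitian]
  have hΨne : ∀ k, vecMulVec (ψ k) (star (ψ k)) ≠ 0 := fun k => by
    have hψk : ψ k ≠ 0 := fun h => by simpa [h] using hψ k k
    simp [hψk]
  have hherm : (ρ - σ)ᴴ = ρ - σ := by simp [hρ, hσ, conjTranspose_sum, (hPh _).eq]
  have hρσ : √(((ρ - σ)ᴴ * (ρ - σ)).trace.re) ≤ δ := by rwa [hherm]
  have hσρ : √(((σ - ρ)ᴴ * (σ - ρ)).trace.re) ≤ δ := by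
    rwa [← neg_sub ρ σ, conjTranspose_neg, neg_mul_neg]
  refine ⟨fun a => ?_, fun k => ?_⟩
  · obtain ⟨k, hk⟩ := exists_norm_sub_le_of_sqrt_re_trace_le hP.toOrthogonalIdempotents hΨ hΨh
      (fun a => (p a : ℂ)) (fun k => (s k : ℂ)) (δ := δ) (by rwa [← hρ, ← hσ]) (hPne a)
    rw [← Complex.ofReal_sub, Complex.norm_real, Real.norm_eq_abs, abs_sub_comm] at hk
    exact ⟨k, hk⟩
  · obtain ⟨a, ha⟩ := exists_norm_sub_le_of_sqrt_re_trace_le hΨ.toOrthogonalIdempotents hP hPh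
      (fun k => (s k : ℂ)) (fun a => (p a : ℂ)) (δ := δ) (by rwa [← hρ, ← hσ]) (hΨne k)
    rw [← Complex.ofReal_sub, Complex.norm_real, Real.norm_eq_abs] at ha
    exact ⟨a, ha⟩

theorem stmt_8 (d n : ℕ)
    (P : Fin n → Matrix (Fin d) (Fin d) ℂ)
    (hPh : ∀ a, (P a).IsHermitian)
    (hPo : ∀ a b, P a * P b = if a = b then P a else 0)
    (hP1 : ∑ a, P a = 1)
    (p : Fin n → ℝ) (hpinj : Function.Injective p)
    (ψ : Fin d → (Fin d → ℂ))
    (hψ : ∀ k l, star (ψ k) ⬝ᵥ ψ l = if k = l then 1 else 0)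
    (s : Fin d → ℝ)
    (ρ σ : Matrix (Fin d) (Fin d) ℂ)
    (hρ : ρ = ∑ a, (p a : ℂ) • P a)
    (hσ : σ = ∑ k, (s k : ℂ) • vecMulVec (ψ k) (star (ψ k)))
    (δ : ℝ) (hδ0 : 0 ≤ δ)
    (hdist : Real.sqrt (((ρ - σ) * (ρ - σ)).trace.re) ≤ δ)
    (hPne : ∀ a, P a ≠ 0) :
    (∀ a, ∃ k, |p a - s k| ≤ δ) ∧ (∀ k, ∃ a, |p a - s k| ≤ δ) :=
  stmt_8_general d n P hPh hPo hP1 p ψ hψ s ρ σ hρ hσ δ hdist hPne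
end

section
/- Let ρ = Σ_{a=1}^n p_a Π_a and σ = Σ_k s_k |ψ_k⟩⟨ψ_k| with d_HS(ρ,σ) ≤ δ < Δ, where Δ = min_{a≠b} |p_a − p_b|. If a ≠ b and |p_b − s_k| ≤ δ, then |p_a − s_k| ≥ Δ − δ and sqrt(⟨ψ_k|Π_a|ψ_k⟩) ≤ δ/(Δ − δ). -/
open Matrix

lemma vmv_mulVec {d : ℕ} (u v x : Fin d → ℂ) :
    vecMulVec u v *ᵥ x = (v ⬝ᵥ x) • u := by
  funext i
  simp [mulVec, vecMulVec_apply, dotProduct, Finset.sum_mul, Finset.mul_sum, mul_assoc,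
    mul_comm, mul_left_comm]

lemma herm_dot {d : ℕ} (B : Matrix (Fin d) (Fin d) ℂ) (hB : Bᴴ = B) (x : Fin d → ℂ) :
    star x ⬝ᵥ (B * B) *ᵥ x = star (B *ᵥ x) ⬝ᵥ (B *ᵥ x) := by
  conv_rhs => rw [star_mulVec, hB, dotProduct_mulVec, vecMul_vecMul]
  rw [dotProduct_mulVec]

lemma sum_mulVec' {d m : ℕ} (M : Fin m → Matrix (Fin d) (Fin d) ℂ) (x : Fin d → ℂ) :
    (∑ l, M l) *ᵥ x = ∑ l, M l *ᵥ x := by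
  funext i
  simp [mulVec, dotProduct, Finset.sum_apply, Matrix.sum_apply, Finset.sum_mul]
  rw [Finset.sum_comm]

lemma trace_mul_vmv {d : ℕ} (M : Matrix (Fin d) (Fin d) ℂ) (u v : Fin d → ℂ) :
    (M * vecMulVec u v).trace = v ⬝ᵥ M *ᵥ u := by
  simp [trace, Matrix.mul_apply, vecMulVec_apply, dotProduct, mulVec, diag,
    Finset.mul_sum, Finset.sum_mul]
  congr 1; ext i; congr 1; ext j; ring

lemma dot_self_real {d : ℕ} (u : Fin d → ℂ) :
    star u ⬝ᵥ u = ((∑ i, Complex.normSq (u i) : ℝ) : ℂ) := by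
  simp only [dotProduct, Pi.star_apply, Complex.star_def]
  push_cast
  exact Finset.sum_congr rfl fun i _ => by rw [mul_comm, Complex.mul_conj]

lemma dot_self_nonneg' {d : ℕ} (u : Fin d → ℂ) : 0 ≤ (star u ⬝ᵥ u).re := by
  rw [dot_self_real, Complex.ofReal_re]
  exact Finset.sum_nonneg fun i _ => Complex.normSq_nonneg _

lemma proj_dot_le {d : ℕ} (P : Matrix (Fin d) (Fin d) ℂ) (hP : Pᴴ = P) (hPP : P * P = P)
    (x : Fin d → ℂ) :
    star (P *ᵥ x) ⬝ᵥ (P *ᵥ x) = star x ⬝ᵥ P *ᵥ x ∧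
    (star (P *ᵥ x) ⬝ᵥ (P *ᵥ x)).re ≤ (star x ⬝ᵥ x).re := by
  have h1 : star (P *ᵥ x) ⬝ᵥ (P *ᵥ x) = star x ⬝ᵥ P *ᵥ x := by
    rw [star_mulVec, hP, dotProduct_mulVec, vecMul_vecMul, hPP, ← dotProduct_mulVec]
  refine ⟨h1, ?_⟩
  set Q : Matrix (Fin d) (Fin d) ℂ := 1 - P with hQ
  have hQH : Qᴴ = Q := by simp [hQ, hP]
  have hQQ : Q * Q = Q := by
    simp [hQ, sub_mul, mul_sub, hPP]
  have h2 : star (Q *ᵥ x) ⬝ᵥ (Q *ᵥ x) = star x ⬝ᵥ Q *ᵥ x := by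
    rw [star_mulVec, hQH, dotProduct_mulVec, vecMul_vecMul, hQQ, ← dotProduct_mulVec]
  have hsplit : star x ⬝ᵥ x = star x ⬝ᵥ P *ᵥ x + star x ⬝ᵥ Q *ᵥ x := by
    rw [← dotProduct_add, ← add_mulVec]
    simp [hQ]
  have := dot_self_nonneg' (Q *ᵥ x)
  rw [h2] at this
  have := congrArg Complex.re hsplit
  rw [h1]
  simp only [Complex.add_re] at this
  linarith [dot_self_nonneg' (Q *ᵥ x), h2 ▸ dot_self_nonneg' (Q *ᵥ x)]

theorem stmt_9 (d n : ℕ)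
    (P : Fin n → Matrix (Fin d) (Fin d) ℂ)
    (hPh : ∀ a, (P a).IsHermitian)
    (hPo : ∀ a b, P a * P b = if a = b then P a else 0)
    (hP1 : ∑ a, P a = 1)
    (p : Fin n → ℝ) (hpinj : Function.Injective p)
    (ψ : Fin d → (Fin d → ℂ))
    (hψ : ∀ k l, star (ψ k) ⬝ᵥ ψ l = if k = l then 1 else 0)
    (s : Fin d → ℝ)
    (ρ σ : Matrix (Fin d) (Fin d) ℂ)
    (hρ : ρ = ∑ a, (p a : ℂ) • P a)
    (hσ : σ = ∑ k, (s k : ℂ) • vecMulVec (ψ k) (star (ψ k)))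
    (δ : ℝ) (hδ0 : 0 ≤ δ)
    (hdist : Real.sqrt (((ρ - σ) * (ρ - σ)).trace.re) ≤ δ)
    (hn : 2 ≤ n)
    (Δ : ℝ) (hΔ : ∀ a b, a ≠ b → Δ ≤ |p a - p b|)
    (hΔex : ∃ a b, a ≠ b ∧ Δ = |p a - p b|)
    (hδΔ : δ < Δ) :
    ∀ a b k, a ≠ b → |p b - s k| ≤ δ →
      Δ - δ ≤ |p a - s k| ∧
      Real.sqrt ((star (ψ k) ⬝ᵥ (P a).mulVec (ψ k)).re) ≤ δ / (Δ - δ) := by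
  intro a b k hab hbk
  -- Part 1
  have part1 : Δ - δ ≤ |p a - s k| := by
    have h1 := hΔ a b hab
    have h2 : |p a - p b| ≤ |p a - s k| + |s k - p b| := abs_sub_le _ _ _
    rw [abs_sub_comm (s k) (p b)] at h2
    linarith
  refine ⟨part1, ?_⟩
  -- setup
  set B : Matrix (Fin d) (Fin d) ℂ := ρ - σ with hB
  have hρH : ρᴴ = ρ := by
    rw [hρ]
    simp only [conjTranspose_sum, conjTranspose_smul]
    refine Finset.sum_congr rfl fun c _ => ?_
    rw [(hPh c).eq]
    simp [Complex.star_def]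
  have hσH : σᴴ = σ := by
    rw [hσ]
    simp only [conjTranspose_sum, conjTranspose_smul]
    refine Finset.sum_congr rfl fun l _ => ?_
    congr 1
    · simp [Complex.star_def]
    · ext i j
      simp [conjTranspose_apply, vecMulVec_apply, mul_comm]
  have hBH : Bᴴ = B := by rw [hB, conjTranspose_sub, hρH, hσH]
  -- completeness of ψ
  have hcomp : ∑ l, vecMulVec (ψ l) (star (ψ l)) = (1 : Matrix (Fin d) (Fin d) ℂ) := by
    set V : Matrix (Fin d) (Fin d) ℂ := Matrix.of (fun i l => ψ l i) with hV
    have hVV : Vᴴ * V = 1 := by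
      ext l m
      simpa [Matrix.mul_apply, conjTranspose_apply, hV, dotProduct, one_apply] using hψ l m
    have hVV2 : V * Vᴴ = 1 := mul_eq_one_comm.mp hVV
    rw [← hVV2]
    ext i j
    simp [Matrix.mul_apply, conjTranspose_apply, hV, vecMulVec_apply, Matrix.sum_apply]
  -- trace bound: ‖B ψk‖² ≤ tr(B²)
  have htr : ((ρ - σ) * (ρ - σ)).trace = ∑ l, star (B *ᵥ ψ l) ⬝ᵥ (B *ᵥ ψ l) := by
    rw [← hB]
    have : B * B = ∑ l, B * B * vecMulVec (ψ l) (star (ψ l)) := by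
      rw [← Finset.mul_sum, hcomp, mul_one]
    rw [this, trace_sum]
    refine Finset.sum_congr rfl fun l _ => ?_
    rw [trace_mul_vmv, herm_dot B hBH]
  have hTnn : ∀ l, 0 ≤ (star (B *ᵥ ψ l) ⬝ᵥ (B *ᵥ ψ l)).re := fun l => dot_self_nonneg' _
  have hkey : (star (B *ᵥ ψ k) ⬝ᵥ (B *ᵥ ψ k)).re ≤ ((ρ - σ) * (ρ - σ)).trace.re := by
    rw [htr, Complex.re_sum]
    exact Finset.single_le_sum (fun l _ => hTnn l) (Finset.mem_univ k)
  have hTδ : ((ρ - σ) * (ρ - σ)).trace.re ≤ δ ^ 2 := by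
    have h0 : 0 ≤ ((ρ - σ) * (ρ - σ)).trace.re := by
      rw [htr, Complex.re_sum]
      exact Finset.sum_nonneg fun l _ => hTnn l
    nlinarith [Real.sq_sqrt h0, Real.sqrt_nonneg (((ρ - σ) * (ρ - σ)).trace.re)]
  -- σ ψk = s k ψk
  have hσψ : σ *ᵥ ψ k = (s k : ℂ) • ψ k := by
    rw [hσ, sum_mulVec']
    rw [Finset.sum_eq_single k]
    · rw [smul_mulVec, vmv_mulVec, hψ k k, if_pos rfl, one_smul]
    · intro l _ hlk
      rw [smul_mulVec, vmv_mulVec, hψ l k, if_neg hlk, zero_smul, smul_zero]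
    · intro h; exact absurd (Finset.mem_univ k) h
  -- P a * ρ = p a • P a
  have hPρ : P a * ρ = (p a : ℂ) • P a := by
    rw [hρ, Finset.mul_sum]
    rw [Finset.sum_eq_single a]
    · rw [mul_smul_comm, hPo a a, if_pos rfl]
    · intro c _ hca
      rw [mul_smul_comm, hPo a c, if_neg (Ne.symm hca), smul_zero]
    · intro h; exact absurd (Finset.mem_univ a) h
  set w : Fin d → ℂ := P a *ᵥ ψ k with hw
  have hPBψ : P a *ᵥ (B *ᵥ ψ k) = ((p a - s k : ℝ) : ℂ) • w := by
    rw [hB, sub_mulVec, hσψ, mulVec_sub, mulVec_smul, mulVec_mulVec, hPρ,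
      smul_mulVec]
    rw [← hw, Complex.ofReal_sub, sub_smul]
  -- projections contract
  have hPa2 : P a * P a = P a := by rw [hPo a a, if_pos rfl]
  have hproj := proj_dot_le (P a) (hPh a) hPa2 (B *ᵥ ψ k)
  -- norm of scaled vector
  have hscale : (star (P a *ᵥ (B *ᵥ ψ k)) ⬝ᵥ (P a *ᵥ (B *ᵥ ψ k))).re
      = (p a - s k) ^ 2 * (star w ⬝ᵥ w).re := by
    rw [hPBψ, star_smul, smul_dotProduct, dotProduct_smul, smul_eq_mul, smul_eq_mul,
      ← mul_assoc, Complex.star_def, Complex.conj_ofReal, ← Complex.ofReal_mul, ← sq,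
      Complex.re_ofReal_mul]
  have hchain : (p a - s k) ^ 2 * (star w ⬝ᵥ w).re ≤ δ ^ 2 := by
    rw [← hscale]
    calc (star (P a *ᵥ (B *ᵥ ψ k)) ⬝ᵥ (P a *ᵥ (B *ᵥ ψ k))).re
        ≤ (star (B *ᵥ ψ k) ⬝ᵥ (B *ᵥ ψ k)).re := hproj.2
      _ ≤ ((ρ - σ) * (ρ - σ)).trace.re := hkey
      _ ≤ δ ^ 2 := hTδ
  -- conclude
  have hwψ : (star (ψ k) ⬝ᵥ (P a).mulVec (ψ k)).re = (star w ⬝ᵥ w).re := by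
    have := proj_dot_le (P a) (hPh a) hPa2 (ψ k)
    rw [← this.1]
  have hm : 0 < Δ - δ := by linarith
  have hmk : 0 < |p a - s k| := lt_of_lt_of_le hm part1
  have hwnn : 0 ≤ (star w ⬝ᵥ w).re := dot_self_nonneg' w
  have hz : (star w ⬝ᵥ w).re ≤ (δ / |p a - s k|) ^ 2 := by
    rw [div_pow, le_div_iff₀ (by positivity)]
    have hsq : |p a - s k| ^ 2 = (p a - s k) ^ 2 := sq_abs _
    nlinarith [hchain]
  have hsw : Real.sqrt ((star w ⬝ᵥ w).re) ≤ δ / |p a - s k| := by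
    calc Real.sqrt ((star w ⬝ᵥ w).re) ≤ Real.sqrt ((δ / |p a - s k|) ^ 2) :=
          Real.sqrt_le_sqrt hz
      _ = δ / |p a - s k| := Real.sqrt_sq (by positivity)
  rw [hwψ]
  refine le_trans hsw ?_
  gcongr
end

section
/- Let ρ = Σ_{a=1}^n p_a Π_a and σ with eigenvalues s_k as above, with d_HS(ρ,σ) ≤ δ < Δ/(1+√d). Define M_a = {k : |p_a − s_k| ≤ δ}. Then the sets M_a are pairwise disjoint and |M_a| = tr Π_a, i.e., the number of eigenvalues of σ within δ of p_a equals the degeneracy of p_a. -/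
/-!
With `Q a k = ⟨ψ k, P a ψ k⟩ ≥ 0` we have `∑ a, Q a k = 1`, `∑ k, Q a k = tr (P a) ∈ ℕ` and, since
`(ρ - σ) ψ k = (ρ - s k) ψ k`, `d_HS(ρ, σ)² = ∑ k, ∑ a, (p a - s k)² Q a k ≤ δ²`.
Thus every `s k` is within `δ` of some `p a`, so once `2δ < Δ` any `k ∉ M a` lies at distance
`≥ Δ - δ` from `p a`, and any `k ∈ M a` at distance `≥ Δ - δ` from every other `p b`.
The weight `Q a` puts outside `M a`, plus the weight `1 - Q a k` missing inside `M a`, is therefore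
at most `δ² / (Δ - δ)² < 1`, so the integer `tr (P a)` differs from `#(M a)` by less than one.
-/

open Finset Matrix

section OrthogonalIdempotents

variable {ι R A : Type*} [Fintype ι]

theorem sum_smul_mul_sum_smul [DecidableEq ι] [CommSemiring R] [Semiring A] [Algebra R A]
    {P : ι → A} (hP : ∀ a b, P a * P b = if a = b then P a else 0) (c e : ι → R) :
    (∑ a, c a • P a) * (∑ b, e b • P b) = ∑ a, (c a * e a) • P a := by
  simp_rw [sum_mul_sum, smul_mul_smul_comm, hP, smul_ite, smul_zero, sum_ite_eq, mem_univ,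
    if_true]

theorem sum_smul_sub_smul_one [CommRing R] [Ring A] [Algebra R A] {P : ι → A}
    (hP : ∑ a, P a = 1) (c : ι → R) (x : R) :
    ∑ a, c a • P a - x • 1 = ∑ a, (c a - x) • P a := by
  simp_rw [← hP, smul_sum, ← sum_sub_distrib, sub_smul]

end OrthogonalIdempotents

namespace Matrix

variable {m ι 𝕜 : Type*} [Fintype m] [RCLike 𝕜]

theorem exists_trace_eq_natCast_of_isIdempotentElem [DecidableEq m] {K : Type*} [Field K]
    {P : Matrix m m K} (hP : IsIdempotentElem P) : ∃ r : ℕ, P.trace = r :=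
  ⟨_, by
    rw [← trace_toLin'_eq]
    exact LinearMap.IsProj.trace
      ((LinearMap.isProj_range_iff_isIdempotentElem _).2 (hP.map toLinAlgEquiv'))⟩

theorem trace_eq_sum_star_dotProduct_mulVec [DecidableEq m] {ψ : m → m → 𝕜}
    (hψ : ∀ k l, star (ψ k) ⬝ᵥ ψ l = if k = l then 1 else 0) (A : Matrix m m 𝕜) :
    A.trace = ∑ k, star (ψ k) ⬝ᵥ A *ᵥ ψ k := by
  set U : Matrix m m 𝕜 := (of ψ)ᵀ
  have hU : Uᴴ * U = 1 := by
    ext k l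
    simpa [U, mul_apply, dotProduct, one_apply] using hψ k l
  calc A.trace = (Uᴴ * A * U).trace := by
        rw [mul_assoc, trace_mul_comm, mul_assoc, mul_eq_one_comm.mp hU, mul_one]
    _ = _ := by
        refine sum_congr rfl fun k _ => ?_
        simp [U, mul_apply, dotProduct, mulVec, mul_sum, mul_assoc]

theorem sum_smul_vecMulVec_mulVec [DecidableEq m] {ψ : m → m → 𝕜}
    (hψ : ∀ k l, star (ψ k) ⬝ᵥ ψ l = if k = l then 1 else 0) (s : m → 𝕜) (k : m) :
    (∑ l, s l • vecMulVec (ψ l) (star (ψ l))) *ᵥ ψ k = s k • ψ k := by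
  simp [sum_mulVec, smul_mulVec, vecMulVec_mulVec, hψ]

omit [Fintype m] in
theorem isHermitian_sum_ofReal_smul [Fintype ι] {P : ι → Matrix m m 𝕜}
    (hP : ∀ a, (P a).IsHermitian) (c : ι → ℝ) : (∑ a, (c a : 𝕜) • P a).IsHermitian :=
  isSelfAdjoint_sum _ fun a _ => (hP a).smul (RCLike.conj_ofReal (c a))

theorem IsHermitian.star_dotProduct_mul_mulVec {A : Matrix m m 𝕜} (hA : A.IsHermitian)
    (B : Matrix m m 𝕜) (v : m → 𝕜) : star v ⬝ᵥ (A * B) *ᵥ v = star (A *ᵥ v) ⬝ᵥ B *ᵥ v := by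
  rw [star_mulVec, hA.eq, ← mulVec_mulVec, dotProduct_mulVec]

theorem IsHermitian.trace_eq_ofReal_sum_re [DecidableEq m] {A : Matrix m m 𝕜}
    (hA : A.IsHermitian) {ψ : m → m → 𝕜}
    (hψ : ∀ k l, star (ψ k) ⬝ᵥ ψ l = if k = l then 1 else 0) :
    A.trace = ((∑ k, RCLike.re (star (ψ k) ⬝ᵥ A *ᵥ ψ k) : ℝ) : 𝕜) := by
  rw [trace_eq_sum_star_dotProduct_mulVec hψ, RCLike.ofReal_sum]
  exact sum_congr rfl fun k _ =>
    RCLike.ext (by simp) (by simp [hA.im_star_dotProduct_mulVec_self])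

open scoped ComplexOrder in
theorem re_star_dotProduct_mulVec_nonneg {P : Matrix m m 𝕜} (hP : P.IsHermitian)
    (hPP : P * P = P) (v : m → 𝕜) : 0 ≤ RCLike.re (star v ⬝ᵥ P *ᵥ v) := by
  have h := (posSemidef_conjTranspose_mul_self P).dotProduct_mulVec_nonneg v
  rw [hP.eq, hPP] at h
  exact (RCLike.nonneg_iff.mp h).1

section SpectralDecomposition

variable [DecidableEq m] [Fintype ι] [DecidableEq ι] {P : ι → Matrix m m 𝕜}
  (hPh : ∀ a, (P a).IsHermitian) (hPo : ∀ a b, P a * P b = if a = b then P a else 0)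
  (hP1 : ∑ a, P a = 1) (p : ι → ℝ)
include hPh hPo hP1

theorem star_dotProduct_sub_mul_sub_mulVec {σ : Matrix m m 𝕜}
    (hσ : σ.IsHermitian) {v : m → 𝕜} {x : ℝ} (hv : σ *ᵥ v = (x : 𝕜) • v) :
    star v ⬝ᵥ ((∑ a, (p a : 𝕜) • P a - σ) * (∑ a, (p a : 𝕜) • P a - σ)) *ᵥ v =
      ∑ a, (((p a - x) ^ 2 : ℝ) : 𝕜) * (star v ⬝ᵥ P a *ᵥ v) := by
  set ρ := ∑ a, (p a : 𝕜) • P a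
  set B := ∑ a, ((p a - x : ℝ) : 𝕜) • P a
  have hB : ρ - (x : 𝕜) • 1 = B := by
    rw [sum_smul_sub_smul_one hP1]
    simp only [B, RCLike.ofReal_sub]
  have hρσ : (ρ - σ) *ᵥ v = B *ᵥ v := by
    rw [← hB, sub_mulVec, sub_mulVec, hv, smul_mulVec, one_mulVec]
  have hρσH : (ρ - σ).IsHermitian := (isHermitian_sum_ofReal_smul hPh p).sub hσ
  have hBH : B.IsHermitian := isHermitian_sum_ofReal_smul hPh _
  calc star v ⬝ᵥ ((ρ - σ) * (ρ - σ)) *ᵥ v = star (B *ᵥ v) ⬝ᵥ B *ᵥ v := by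
        rw [hρσH.star_dotProduct_mul_mulVec, hρσ]
    _ = star v ⬝ᵥ (B * B) *ᵥ v := (hBH.star_dotProduct_mul_mulVec _ _).symm
    _ = _ := by
        simp [B, sum_smul_mul_sum_smul hPo, sum_mulVec, dotProduct_sum, smul_mulVec, sq]

theorem re_trace_sub_mul_sub {ψ : m → m → 𝕜}
    (hψ : ∀ k l, star (ψ k) ⬝ᵥ ψ l = if k = l then 1 else 0) {σ : Matrix m m 𝕜}
    (hσ : σ.IsHermitian) {s : m → ℝ} (hσψ : ∀ k, σ *ᵥ ψ k = (s k : 𝕜) • ψ k) :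
    RCLike.re ((∑ a, (p a : 𝕜) • P a - σ) * (∑ a, (p a : 𝕜) • P a - σ)).trace =
      ∑ k, ∑ a, (p a - s k) ^ 2 * RCLike.re (star (ψ k) ⬝ᵥ P a *ᵥ ψ k) := by
  rw [trace_eq_sum_star_dotProduct_mulVec hψ, map_sum]
  refine sum_congr rfl fun k _ => ?_
  rw [star_dotProduct_sub_mul_sub_mulVec hPh hPo hP1 p hσ (hσψ k), map_sum]
  simp_rw [RCLike.re_ofReal_mul]

end SpectralDecomposition

end Matrix

section Counting

variable {ι κ : Type*} [Fintype ι] {p : ι → ℝ} {δ Δ : ℝ}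

theorem disjoint_filter_abs_sub_le [Fintype κ] {s : κ → ℝ} {x y : ℝ} (h : 2 * δ < |x - y|) :
    Disjoint ({k | |x - s k| ≤ δ} : Finset κ) ({k | |y - s k| ≤ δ} : Finset κ) :=
  disjoint_filter.2 fun k _ hx hy => by
    linarith [abs_sub_le x (s k) y, abs_sub_comm (s k) y]

theorem sq_mul_sum_le_sum_sq_sub_mul {Q : ι → ℝ} (hQ : ∀ a, 0 ≤ Q a) {x c : ℝ} (hc : 0 ≤ c)
    {S : Finset ι} (hS : ∀ a ∈ S, c ≤ |p a - x|) :
    c ^ 2 * ∑ a ∈ S, Q a ≤ ∑ a, (p a - x) ^ 2 * Q a := by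
  rw [mul_sum]
  calc ∑ a ∈ S, c ^ 2 * Q a ≤ ∑ a ∈ S, (p a - x) ^ 2 * Q a :=
        sum_le_sum fun a ha => mul_le_mul_of_nonneg_right
          (sq_abs (p a - x) ▸ pow_le_pow_left₀ hc (hS a ha) 2) (hQ a)
    _ ≤ _ := sum_le_sum_of_subset_of_nonneg (subset_univ S)
        fun a _ _ => mul_nonneg (sq_nonneg _) (hQ a)

section Gap

variable {Q : ι → ℝ} (hQ0 : ∀ a, 0 ≤ Q a) (hQ1 : ∑ a, Q a = 1) {x : ℝ}
  (hΔ : ∀ a b, a ≠ b → Δ ≤ |p a - p b|) (hΔδ : 0 ≤ Δ - δ)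
include hQ0 hQ1

theorem exists_abs_sub_le_of_sum_sq_sub_mul_le (hδ : 0 ≤ δ)
    (hN : ∑ a, (p a - x) ^ 2 * Q a ≤ δ ^ 2) : ∃ a, |p a - x| ≤ δ := by
  obtain ⟨a, -, ha⟩ := exists_min_image univ (fun a => |p a - x|)
    (nonempty_of_sum_ne_zero (hQ1 ▸ one_ne_zero))
  have h := sq_mul_sum_le_sum_sq_sub_mul hQ0 (abs_nonneg (p a - x)) (S := univ) ha
  rw [hQ1, mul_one] at h
  exact ⟨a, (pow_le_pow_iff_left₀ (abs_nonneg _) hδ two_ne_zero).1 (h.trans hN)⟩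

include hΔ hΔδ

theorem sq_sub_mul_one_sub_le {a : ι} (hx : |p a - x| ≤ δ) :
    (Δ - δ) ^ 2 * (1 - Q a) ≤ ∑ b, (p b - x) ^ 2 * Q b := by
  classical
  rw [← hQ1, ← sum_erase_eq_sub (mem_univ a)]
  refine sq_mul_sum_le_sum_sq_sub_mul hQ0 hΔδ fun b hb => ?_
  linarith [hΔ b a (ne_of_mem_erase hb), abs_sub_le (p b) x (p a), abs_sub_comm x (p a)]

theorem sq_sub_mul_le_of_lt_abs_sub (hδ : 0 ≤ δ) (hN : ∑ a, (p a - x) ^ 2 * Q a ≤ δ ^ 2)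
    {a : ι} (hx : δ < |p a - x|) : (Δ - δ) ^ 2 * Q a ≤ ∑ b, (p b - x) ^ 2 * Q b := by
  obtain ⟨b, hb⟩ := exists_abs_sub_le_of_sum_sq_sub_mul_le hQ0 hQ1 hδ hN
  have hab : a ≠ b := by rintro rfl; linarith
  simpa using sq_mul_sum_le_sum_sq_sub_mul hQ0 hΔδ (S := {a}) (by
    simpa using by linarith [hΔ a b hab, abs_sub_le (p a) x (p b), abs_sub_comm x (p b)])

end Gap

theorem card_filter_abs_sub_le_eq [Fintype κ] {Q : ι → κ → ℝ} (hQ0 : ∀ a k, 0 ≤ Q a k)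
    (hQ1 : ∀ k, ∑ a, Q a k = 1) {s : κ → ℝ} (hδ : 0 ≤ δ) (hδΔ : 2 * δ < Δ)
    (hΔ : ∀ a b, a ≠ b → Δ ≤ |p a - p b|) (hN : ∑ k, ∑ a, (p a - s k) ^ 2 * Q a k ≤ δ ^ 2)
    (a : ι) {r : ℕ} (hr : ∑ k, Q a k = r) : #{k | |p a - s k| ≤ δ} = r := by
  classical
  set M : Finset κ := {k | |p a - s k| ≤ δ}
  set N := fun k => ∑ b, (p b - s k) ^ 2 * Q b k
  have hNk : ∀ k, N k ≤ δ ^ 2 := fun k => (single_le_sum (f := N)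
    (fun j _ => sum_nonneg fun b _ => mul_nonneg (sq_nonneg _) (hQ0 b j)) (mem_univ k)).trans hN
  have hΔδ : 0 ≤ Δ - δ := by linarith
  set inside := ∑ k ∈ M, (1 - Q a k)
  set outside := ∑ k ∈ Mᶜ, Q a k
  have hdefect : (Δ - δ) ^ 2 * (inside + outside) ≤ δ ^ 2 :=
    calc (Δ - δ) ^ 2 * (inside + outside)
        = ∑ k ∈ M, (Δ - δ) ^ 2 * (1 - Q a k) + ∑ k ∈ Mᶜ, (Δ - δ) ^ 2 * Q a k := by
          rw [mul_add, mul_sum, mul_sum]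
      _ ≤ ∑ k ∈ M, N k + ∑ k ∈ Mᶜ, N k := add_le_add
          (sum_le_sum fun k hk =>
            sq_sub_mul_one_sub_le (hQ0 · k) (hQ1 k) hΔ hΔδ (mem_filter.1 hk).2)
          (sum_le_sum fun k hk => sq_sub_mul_le_of_lt_abs_sub (hQ0 · k) (hQ1 k) hΔ hΔδ hδ
            (hNk k) (by simpa [M] using hk))
      _ = ∑ k, N k := sum_add_sum_compl M N
      _ ≤ δ ^ 2 := hN
  have hinside : 0 ≤ inside := sum_nonneg fun k _ =>
    sub_nonneg.2 (hQ1 k ▸ single_le_sum (fun b _ => hQ0 b k) (mem_univ a))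
  have houtside : 0 ≤ outside := sum_nonneg fun k _ => hQ0 a k
  have hsmall : inside + outside < 1 := by
    by_contra! h
    nlinarith
  have hsplit : (r : ℝ) = #M - inside + outside := by
    rw [← hr, ← sum_add_sum_compl M]
    simp only [inside, outside, sum_sub_distrib, sum_const, nsmul_one]
    ring
  have h1 : #M < r + 1 := by exact_mod_cast (by linarith : (#M : ℝ) < r + 1)
  have h2 : r < #M + 1 := by exact_mod_cast (by linarith : (r : ℝ) < #M + 1)
  omega

end Counting

theorem stmt_10_general (d n : ℕ)
    (P : Fin n → Matrix (Fin d) (Fin d) ℂ)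
    (hPh : ∀ a, (P a).IsHermitian)
    (hPo : ∀ a b, P a * P b = if a = b then P a else 0)
    (hP1 : ∑ a, P a = 1)
    (p : Fin n → ℝ)
    (ψ : Fin d → (Fin d → ℂ))
    (hψ : ∀ k l, star (ψ k) ⬝ᵥ ψ l = if k = l then 1 else 0)
    (s : Fin d → ℝ)
    (ρ σ : Matrix (Fin d) (Fin d) ℂ)
    (hρ : ρ = ∑ a, (p a : ℂ) • P a)
    (hσ : σ = ∑ k, (s k : ℂ) • vecMulVec (ψ k) (star (ψ k)))
    (δ : ℝ)
    (hdist : Real.sqrt (((ρ - σ) * (ρ - σ)).trace.re) ≤ δ)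
    (Δ : ℝ) (hΔ : ∀ a b, a ≠ b → Δ ≤ |p a - p b|)
    (hδΔ : δ < Δ / (1 + Real.sqrt d))
    (M : Fin n → Finset (Fin d))
    (hM : ∀ a, M a = Finset.univ.filter (fun k => |p a - s k| ≤ δ)) :
    (∀ a b, a ≠ b → Disjoint (M a) (M b)) ∧
    (∀ a, ((M a).card : ℂ) = (P a).trace) := by
  obtain rfl | hd := Nat.eq_zero_or_pos d
  · exact ⟨fun a b _ => by simp [hM], fun a => by simp [hM]⟩
  have hδ : 0 ≤ δ := (Real.sqrt_nonneg _).trans hdist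
  have hgap : 2 * δ < Δ := by
    have : 1 ≤ Real.sqrt d := Real.one_le_sqrt.2 (Nat.one_le_cast.2 hd)
    rw [lt_div_iff₀ (by positivity)] at hδΔ
    nlinarith
  have hPP : ∀ a, P a * P a = P a := fun a => by simpa using hPo a a
  have hσH : σ.IsHermitian := hσ ▸ isHermitian_sum_ofReal_smul
    (fun k => by rw [IsHermitian, conjTranspose_vecMulVec, star_star]) s
  have hσψ : ∀ k, σ *ᵥ ψ k = (s k : ℂ) • ψ k := fun k => hσ ▸ sum_smul_vecMulVec_mulVec hψ _ k
  set Q : Fin n → Fin d → ℝ := fun a k => (star (ψ k) ⬝ᵥ P a *ᵥ ψ k).re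
  have hQ1 : ∀ k, ∑ a, Q a k = 1 := fun k => by
    simp [Q, ← Complex.re_sum, ← dotProduct_sum, ← sum_mulVec, hP1, hψ]
  have hN : ∑ k, ∑ a, (p a - s k) ^ 2 * Q a k ≤ δ ^ 2 := by
    subst hρ
    exact (re_trace_sub_mul_sub hPh hPo hP1 p hψ hσH hσψ).symm.le.trans
      ((Real.sqrt_le_left hδ).1 hdist)
  refine ⟨fun a b hab => hM a ▸ hM b ▸ disjoint_filter_abs_sub_le (by linarith [hΔ a b hab]),
    fun a => ?_⟩
  obtain ⟨r, hr⟩ := exists_trace_eq_natCast_of_isIdempotentElem (hPP a)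
  have hQr : ((∑ k, Q a k : ℝ) : ℂ) = r := ((hPh a).trace_eq_ofReal_sum_re hψ).symm.trans hr
  rw [hM, hr, card_filter_abs_sub_le_eq
    (fun a k => re_star_dotProduct_mulVec_nonneg (hPh a) (hPP a) (ψ k)) hQ1 hδ hgap hΔ hN a
    (mod_cast hQr)]

theorem stmt_10 (d n : ℕ)
    (P : Fin n → Matrix (Fin d) (Fin d) ℂ)
    (hPh : ∀ a, (P a).IsHermitian)
    (hPo : ∀ a b, P a * P b = if a = b then P a else 0)
    (hP1 : ∑ a, P a = 1)
    (p : Fin n → ℝ) (hpinj : Function.Injective p)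
    (ψ : Fin d → (Fin d → ℂ))
    (hψ : ∀ k l, star (ψ k) ⬝ᵥ ψ l = if k = l then 1 else 0)
    (s : Fin d → ℝ)
    (ρ σ : Matrix (Fin d) (Fin d) ℂ)
    (hρ : ρ = ∑ a, (p a : ℂ) • P a)
    (hσ : σ = ∑ k, (s k : ℂ) • vecMulVec (ψ k) (star (ψ k)))
    (δ : ℝ) (hδ0 : 0 ≤ δ)
    (hdist : Real.sqrt (((ρ - σ) * (ρ - σ)).trace.re) ≤ δ)
    (hn : 2 ≤ n) (hPne : ∀ a, P a ≠ 0)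
    (Δ : ℝ) (hΔ : ∀ a b, a ≠ b → Δ ≤ |p a - p b|)
    (hΔex : ∃ a b, a ≠ b ∧ Δ = |p a - p b|)
    (hδΔ : δ < Δ / (1 + Real.sqrt d))
    (M : Fin n → Finset (Fin d))
    (hM : ∀ a, M a = Finset.univ.filter (fun k => |p a - s k| ≤ δ)) :
    (∀ a b, a ≠ b → Disjoint (M a) (M b)) ∧
    (∀ a, ((M a).card : ℂ) = (P a).trace) :=
  stmt_10_general d n P hPh hPo hP1 p ψ hψ s ρ σ hρ hσ δ hdist Δ hΔ hδΔ M hM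
end

section
/- Under the hypotheses of the previous lemma, if a ≠ b and |p_a − s_k| ≤ δ, then ⟨ψ_k|Π_b|ψ_k⟩ ≤ 4δ²/(p_a − p_b)². -/
/-!
Let `v = ψ k`, a unit eigenvector of `σ` with eigenvalue `s k`. The Hilbert–Schmidt norm bounds
the operator norm, so `‖(ρ - σ) v‖ ≤ δ`, and with `|s k - p a| ≤ δ` the triangle inequality gives
`‖(ρ - p a) v‖ ≤ 2δ`. Applying the orthogonal projection `P b`, which is a contraction and
satisfies `P b (ρ - p a) = (p b - p a) P b`, yields `|p b - p a| ‖P b v‖ ≤ 2δ`; finally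
`⟨v, P b v⟩ = ‖P b v‖²`.
-/

open Matrix

namespace Matrix

variable {𝕜 : Type*} [RCLike 𝕜] {ι m n : Type*}

lemma isHermitian_vecMulVec_star (v : n → 𝕜) : (vecMulVec v (star v)).IsHermitian := by
  rw [IsHermitian, conjTranspose_vecMulVec, star_star]

variable [Fintype ι]

lemma isHermitian_sum_ofReal_smul_s12 (r : ι → ℝ) {Q : ι → Matrix n n 𝕜}
    (hQ : ∀ i, (Q i).IsHermitian) : (∑ i, (r i : 𝕜) • Q i).IsHermitian :=
  isHermitian_iff_isSelfAdjoint.mpr <| isSelfAdjoint_sum _ fun i _ =>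
    IsSelfAdjoint.smul (RCLike.conj_ofReal _) (isHermitian_iff_isSelfAdjoint.mp (hQ i))

variable [Fintype m] [Fintype n]

lemma norm_toLp_sq (x : n → 𝕜) : ‖WithLp.toLp 2 x‖ ^ 2 = RCLike.re (star x ⬝ᵥ x) := by
  rw [norm_sq_eq_re_inner (𝕜 := 𝕜), EuclideanSpace.inner_toLp_toLp, dotProduct_comm]

open scoped Matrix.Norms.Frobenius in
lemma frobenius_norm_sq_eq_re_trace (A : Matrix m n 𝕜) :
    ‖A‖ ^ 2 = RCLike.re (Aᴴ * A).trace := by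
  rw [← star_vec_dotProduct_vec, ← norm_toLp_sq, EuclideanSpace.norm_sq_eq, frobenius_norm_def,
    ← Real.sqrt_eq_rpow]
  simp only [Real.rpow_two]
  rw [Real.sq_sqrt (by positivity), Fintype.sum_prod_type, Finset.sum_comm]
  rfl

open scoped Matrix.Norms.Frobenius in
lemma norm_toLp_mulVec_le_frobenius (A : Matrix m n 𝕜) (x : n → 𝕜) :
    ‖WithLp.toLp 2 (A *ᵥ x)‖ ≤ ‖A‖ * ‖WithLp.toLp 2 x‖ := by
  simpa [← replicateCol_mulVec] using frobenius_norm_mul A (replicateCol Unit x)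

open scoped Matrix.Norms.Frobenius in
lemma norm_toLp_mulVec_le_of_isHermitian {A : Matrix n n 𝕜} (hA : A.IsHermitian) (x : n → 𝕜) :
    ‖WithLp.toLp 2 (A *ᵥ x)‖ ≤ √(RCLike.re (A * A).trace) * ‖WithLp.toLp 2 x‖ := by
  have hnorm := frobenius_norm_sq_eq_re_trace A
  rw [hA.eq] at hnorm
  rw [← hnorm, Real.sqrt_sq (norm_nonneg _)]
  exact norm_toLp_mulVec_le_frobenius A x

lemma norm_toLp_mulVec_sub_smul_le {A B : Matrix n n 𝕜} {x : n → 𝕜} {s : 𝕜}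
    (hBx : B *ᵥ x = s • x) (c : 𝕜) :
    ‖WithLp.toLp 2 (A *ᵥ x - c • x)‖ ≤
      ‖WithLp.toLp 2 ((A - B) *ᵥ x)‖ + ‖s - c‖ * ‖WithLp.toLp 2 x‖ := by
  have hsplit : A *ᵥ x - c • x = (A - B) *ᵥ x + (s - c) • x := by
    rw [sub_mulVec, hBx, sub_smul]
    abel
  rw [hsplit, WithLp.toLp_add, WithLp.toLp_smul, ← norm_smul]
  exact norm_add_le _ _

lemma IsHermitian.isStarProjection {P : Matrix n n 𝕜} (hP : P.IsHermitian) (hPP : P * P = P) :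
    IsStarProjection P :=
  ⟨hPP, isHermitian_iff_isSelfAdjoint.mp hP⟩

open scoped Matrix.Norms.L2Operator in
lemma norm_toLp_mulVec_le_of_isStarProjection [DecidableEq n] {P : Matrix n n 𝕜}
    (hP : IsStarProjection P) (x : n → 𝕜) : ‖WithLp.toLp 2 (P *ᵥ x)‖ ≤ ‖WithLp.toLp 2 x‖ :=
  (l2_opNorm_mulVec P (WithLp.toLp 2 x)).trans (mul_le_of_le_one_left (norm_nonneg _) hP.norm_le)

lemma re_star_dotProduct_mulVec_eq_norm_sq {P : Matrix n n 𝕜} (hP : IsStarProjection P)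
    (x : n → 𝕜) : RCLike.re (star x ⬝ᵥ P *ᵥ x) = ‖WithLp.toLp 2 (P *ᵥ x)‖ ^ 2 := by
  rw [norm_toLp_sq, star_mulVec, ← dotProduct_mulVec, mulVec_mulVec,
    (isHermitian_iff_isSelfAdjoint.mpr hP.isSelfAdjoint).eq, hP.isIdempotentElem.eq]

lemma sum_smul_vecMulVec_star_mulVec [DecidableEq ι] {ψ : ι → n → 𝕜}
    (hψ : ∀ k l, star (ψ k) ⬝ᵥ ψ l = if k = l then 1 else 0) (s : ι → 𝕜) (k : ι) :
    (∑ l, s l • vecMulVec (ψ l) (star (ψ l))) *ᵥ ψ k = s k • ψ k := by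
  simp [sum_mulVec, smul_mulVec, vecMulVec_mulVec, hψ]

lemma mul_sum_smul_of_orthogonal [DecidableEq ι] {P : ι → Matrix n n 𝕜}
    (hPo : ∀ a b, P a * P b = if a = b then P a else 0) (μ : ι → 𝕜) (b : ι) :
    P b * ∑ a, μ a • P a = μ b • P b := by
  simp [Finset.mul_sum, hPo]

lemma sq_sub_mul_re_star_dotProduct_mulVec_le [DecidableEq ι] [DecidableEq n]
    {P : ι → Matrix n n 𝕜} (hPh : ∀ a, (P a).IsHermitian)
    (hPo : ∀ a b, P a * P b = if a = b then P a else 0) (p : ι → ℝ) (c : ℝ) (b : ι)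
    (x : n → 𝕜) :
    (p b - c) ^ 2 * RCLike.re (star x ⬝ᵥ P b *ᵥ x) ≤
      ‖WithLp.toLp 2 ((∑ a, (p a : 𝕜) • P a) *ᵥ x - (c : 𝕜) • x)‖ ^ 2 := by
  have hPb := (hPh b).isStarProjection (by simpa using hPo b b)
  have hproj : P b *ᵥ ((∑ a, (p a : 𝕜) • P a) *ᵥ x - (c : 𝕜) • x) =
      ((p b - c : ℝ) : 𝕜) • P b *ᵥ x := by
    rw [mulVec_sub, mulVec_mulVec, mul_sum_smul_of_orthogonal hPo, mulVec_smul, smul_mulVec,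
      RCLike.ofReal_sub, sub_smul]
  calc (p b - c) ^ 2 * RCLike.re (star x ⬝ᵥ P b *ᵥ x)
      = ‖WithLp.toLp 2 (P b *ᵥ ((∑ a, (p a : 𝕜) • P a) *ᵥ x - (c : 𝕜) • x))‖ ^ 2 := by
        rw [re_star_dotProduct_mulVec_eq_norm_sq hPb, hproj, WithLp.toLp_smul, norm_smul,
          RCLike.norm_ofReal, mul_pow, sq_abs]
    _ ≤ _ := pow_le_pow_left₀ (norm_nonneg _) (norm_toLp_mulVec_le_of_isStarProjection hPb _) 2

end Matrix

theorem stmt_12_general (d n : ℕ)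
    (P : Fin n → Matrix (Fin d) (Fin d) ℂ)
    (hPh : ∀ a, (P a).IsHermitian)
    (hPo : ∀ a b, P a * P b = if a = b then P a else 0)
    (p : Fin n → ℝ) (hpinj : Function.Injective p)
    (ψ : Fin d → (Fin d → ℂ))
    (hψ : ∀ k l, star (ψ k) ⬝ᵥ ψ l = if k = l then 1 else 0)
    (s : Fin d → ℝ)
    (ρ σ : Matrix (Fin d) (Fin d) ℂ)
    (hρ : ρ = ∑ a, (p a : ℂ) • P a)
    (hσ : σ = ∑ k, (s k : ℂ) • vecMulVec (ψ k) (star (ψ k)))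
    (δ : ℝ)
    (hdist : Real.sqrt (((ρ - σ) * (ρ - σ)).trace.re) ≤ δ) :
    ∀ a b k, a ≠ b → |p a - s k| ≤ δ →
      (star (ψ k) ⬝ᵥ (P b).mulVec (ψ k)).re ≤ 4 * δ ^ 2 / (p a - p b) ^ 2 := by
  intro a b k hab hk
  have hunit : ‖WithLp.toLp 2 (ψ k)‖ = 1 := by
    rw [← pow_eq_one_iff_of_nonneg (norm_nonneg _) two_ne_zero, norm_toLp_sq, hψ, if_pos rfl]
    rfl
  have hherm : (ρ - σ).IsHermitian := by
    rw [hρ, hσ]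
    exact (isHermitian_sum_ofReal_smul_s12 p hPh).sub
      (isHermitian_sum_ofReal_smul_s12 s fun l => isHermitian_vecMulVec_star (ψ l))
  have hnear : ‖WithLp.toLp 2 (ρ *ᵥ ψ k - (p a : ℂ) • ψ k)‖ ≤ 2 * δ := by
    refine (norm_toLp_mulVec_sub_smul_le (hσ ▸ sum_smul_vecMulVec_star_mulVec hψ _ k) _).trans ?_
    rw [hunit, mul_one, two_mul]
    gcongr
    · exact (norm_toLp_mulVec_le_of_isHermitian hherm _).trans (by rwa [hunit, mul_one])
    · rwa [← Complex.ofReal_sub, Complex.norm_real, Real.norm_eq_abs, abs_sub_comm]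
  have hweight : (p b - p a) ^ 2 * (star (ψ k) ⬝ᵥ P b *ᵥ ψ k).re ≤
      ‖WithLp.toLp 2 (ρ *ᵥ ψ k - (p a : ℂ) • ψ k)‖ ^ 2 := by
    subst hρ
    exact sq_sub_mul_re_star_dotProduct_mulVec_le hPh hPo p (p a) b (ψ k)
  have hgap : 0 < (p a - p b) ^ 2 := by
    have := sub_ne_zero.mpr (hpinj.ne hab)
    positivity
  rw [le_div_iff₀ hgap]
  calc (star (ψ k) ⬝ᵥ P b *ᵥ ψ k).re * (p a - p b) ^ 2
      = (p b - p a) ^ 2 * (star (ψ k) ⬝ᵥ P b *ᵥ ψ k).re := by ring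
    _ ≤ (2 * δ) ^ 2 := hweight.trans (pow_le_pow_left₀ (norm_nonneg _) hnear 2)
    _ = 4 * δ ^ 2 := by ring

theorem stmt_12 (d n : ℕ)
    (P : Fin n → Matrix (Fin d) (Fin d) ℂ)
    (hPh : ∀ a, (P a).IsHermitian)
    (hPo : ∀ a b, P a * P b = if a = b then P a else 0)
    (hP1 : ∑ a, P a = 1)
    (p : Fin n → ℝ) (hpinj : Function.Injective p)
    (ψ : Fin d → (Fin d → ℂ))
    (hψ : ∀ k l, star (ψ k) ⬝ᵥ ψ l = if k = l then 1 else 0)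
    (s : Fin d → ℝ)
    (ρ σ : Matrix (Fin d) (Fin d) ℂ)
    (hρ : ρ = ∑ a, (p a : ℂ) • P a)
    (hσ : σ = ∑ k, (s k : ℂ) • vecMulVec (ψ k) (star (ψ k)))
    (δ : ℝ) (hδ0 : 0 ≤ δ)
    (hdist : Real.sqrt (((ρ - σ) * (ρ - σ)).trace.re) ≤ δ)
    (hn : 2 ≤ n)
    (Δ : ℝ) (hΔ : ∀ a b, a ≠ b → Δ ≤ |p a - p b|)
    (hΔex : ∃ a b, a ≠ b ∧ Δ = |p a - p b|)
    (hδΔ : δ < Δ / (1 + Real.sqrt d)) :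
    ∀ a b k, a ≠ b → |p a - s k| ≤ δ →
      (star (ψ k) ⬝ᵥ (P b).mulVec (ψ k)).re ≤ 4 * δ ^ 2 / (p a - p b) ^ 2 :=
  stmt_12_general d n P hPh hPo p hpinj ψ hψ s ρ σ hρ hσ δ hdist
end
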